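/- Every root-to-leaf path in the cotree T* (rooted at h∞*) contains at most one arc penetrating Vor*(v) at C*_0, and contains no arc exiting Vor*(v) at C*_0. -/

import Mathlib

open scoped Classical

/-- A finite connected directed planar embedded multigraph, presented by a rotation system
(darts with reversal and a counterclockwise rotation around each vertex), together with its
faces and Euler's formula (which forces the embedding to be planar). Every arc has an
antiparallel reverse arc embedded on the same curve. -/
structure PlanarGraph where
  /-- vertices -/
  V : Type
  /-- arcs (darts) -/
  A : Type
  /-- faces -/
  F : Type
  fintypeV : Fintype V
  fintypeA : Fintype A
  fintypeF : Fintype F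
  decV : DecidableEq V
  decA : DecidableEq A
  decF : DecidableEq F
  tail : A → V
  head : A → V
  /-- arc reversal -/
  rev : A → A
  rev_rev : ∀ a, rev (rev a) = a
  rev_ne : ∀ a, rev a ≠ a
  tail_rev : ∀ a, tail (rev a) = head a
  /-- rotation: the next arc, counterclockwise, among the arcs with the same tail -/
  rot : Equiv.Perm A
  tail_rot : ∀ a, tail (rot a) = tail a
  /-- the face lying to the left of an arc -/
  left : A → F
  /-- along the boundary walk of a face, the arc following `a` is `rot (rev a)` -/
  left_faceNext : ∀ a, left (rot (rev a)) = left a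
  /-- the boundary of each face is a single orbit of the face-walk -/
  face_orbit : ∀ a b, left a = left b → ∃ n : ℕ, (fun x => rot (rev x))^[n] a = b
  left_surjective : Function.Surjective left
  /-- the graph is connected -/
  connected : ∀ u w : V, Relation.ReflTransGen (fun x y => ∃ a, tail a = x ∧ head a = y) u w
  /-- Euler's formula `|V| - |E| + |F| = 2` (where `|E| = |A|/2`): the embedding is planar -/
  euler : 2 * @Fintype.card V fintypeV + 2 * @Fintype.card F fintypeF
            = @Fintype.card A fintypeA + 4

attribute [instance] PlanarGraph.fintypeV PlanarGraph.fintypeA PlanarGraph.fintypeF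
attribute [instance] PlanarGraph.decV PlanarGraph.decA PlanarGraph.decF

namespace PlanarGraph

variable (G : PlanarGraph)

/-- the face to the right of an arc -/
def right (a : G.A) : G.F := G.left (G.rev a)

/-- the tail of the dual arc `a*`: the face to the left of `a` -/
def dualTail (a : G.A) : G.F := G.left a

/-- the head of the dual arc `a*`: the face to the right of `a` -/
def dualHead (a : G.A) : G.F := G.right a

/-- a vertex is incident to a face -/
def Incident (w : G.V) (f : G.F) : Prop := ∃ a, G.tail a = w ∧ G.left a = f

/-- the dual arc `a*` is incident to the dual vertex (face) `φ` -/
def DualIncident (a : G.A) (φ : G.F) : Prop := G.dualTail a = φ ∨ G.dualHead a = φ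

/-- `IsWalk p u w`: the list of arcs `p` forms a walk from `u` to `w` in `G` -/
def IsWalk : List G.A → G.V → G.V → Prop
  | [], u, w => u = w
  | a :: p, u, w => G.tail a = u ∧ IsWalk p (G.head a) w

/-- the vertices visited by a walk starting at `u` -/
def walkVertices (p : List G.A) (u : G.V) : List G.V := u :: p.map G.head

/-- `IsDualWalk s p φ ψ`: the arcs of `p` lie in `s` and their duals form a walk from the
face `φ` to the face `ψ` in the dual graph `P*` -/
def IsDualWalk (s : Set G.A) : List G.A → G.F → G.F → Prop
  | [], φ, ψ => φ = ψ
  | a :: p, φ, ψ => a ∈ s ∧ G.dualTail a = φ ∧ IsDualWalk s p (G.dualHead a) ψ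

/-- the length of a walk with respect to the arc lengths `len` -/
def walkLen (len : G.A → ℝ) (p : List G.A) : ℝ := (p.map len).sum

/-- `d` is the shortest-path distance of `G` with respect to the arc lengths `len` -/
def IsSPDist (len : G.A → ℝ) (d : G.V → G.V → ℝ) : Prop :=
  ∀ u w : G.V, (∃ p, G.IsWalk p u w ∧ G.walkLen len p = d u w) ∧
    ∀ p, G.IsWalk p u w → d u w ≤ G.walkLen len p

/-- there are no negative-length cycles -/
def NoNegCycle (len : G.A → ℝ) : Prop :=
  ∀ (u : G.V) (p : List G.A), G.IsWalk p u u → 0 ≤ G.walkLen len p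

/-- shortest paths are unique -/
def UniqueShortestPaths (len : G.A → ℝ) (d : G.V → G.V → ℝ) : Prop :=
  ∀ (u w : G.V) (p q : List G.A), G.IsWalk p u w → G.IsWalk q u w →
    G.walkLen len p = d u w → G.walkLen len q = d u w → p = q

/-- vertex-to-vertex distances are pairwise distinct -/
def GenericDistances (d : G.V → G.V → ℝ) : Prop :=
  ∀ u w u' w' : G.V, u ≠ w → u' ≠ w' → d u w = d u' w' → u = u' ∧ w = w'

/-- the additively weighted Voronoi cell of a site `u` among the sites `S`:
the vertices strictly closer (in additively weighted distance) to `u` than to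
any other site of `S` -/
def VorCell (d : G.V → G.V → ℝ) (S : Set G.V) (ω : G.V → ℝ) (u : G.V) : Set G.V :=
  {w | u ∈ S ∧ ∀ u' ∈ S, u' ≠ u → ω u + d u w < ω u' + d u' w}

/-- the bisector `β*(u,v)` (as a set of (duals of) arcs): duals of the arcs whose tail is
closer to `u` and whose head is closer to `v` in the two-site diagram `VD({u,v},ω)` -/
def bisector (d : G.V → G.V → ℝ) (u v : G.V) (ωu ωv : ℝ) : Set G.A :=
  {a | ωu + d u (G.tail a) < ωv + d v (G.tail a) ∧
       ωv + d v (G.head a) < ωu + d u (G.head a)}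

/-- `s` is a simple cycle in the dual graph `P*` -/
def IsSimpleDualCycle (s : Set G.A) : Prop :=
  s.Nonempty ∧
  Set.InjOn G.dualTail s ∧
  Set.InjOn G.dualHead s ∧
  (∀ a ∈ s, ∃ b ∈ s, G.dualTail b = G.dualHead a) ∧
  (∀ a ∈ s, ∃ b ∈ s, G.dualHead b = G.dualTail a) ∧
  ∀ a ∈ s, ∀ b ∈ s,
    Relation.ReflTransGen (fun x y => x ∈ s ∧ y ∈ s ∧ G.dualHead x = G.dualTail y) a b

/-- `t` is (the arc set of) a contiguous segment of the dual cycle `s` -/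
def IsSegmentOf (t s : Set G.A) : Prop :=
  t ⊆ s ∧ ∃ (f : ℕ → G.A) (n : ℕ),
    (∀ k < n, f k ∈ s) ∧
    (∀ k, k + 1 < n → G.dualHead (f k) = G.dualTail (f (k + 1))) ∧
    t = {a | ∃ k < n, f k = a}

/-- `f` enumerates the arc set `s` as a (simple) closed walk of length `n` in the dual graph -/
def IsCyclicEnum (s : Set G.A) (f : ℕ → G.A) (n : ℕ) : Prop :=
  0 < n ∧ (∀ k < n, f k ∈ s) ∧ (∀ a ∈ s, ∃ k < n, f k = a) ∧
  (∀ k l, k < n → l < n → f k = f l → k = l) ∧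
  (∀ k, k + 1 < n → G.dualHead (f k) = G.dualTail (f (k + 1))) ∧
  G.dualHead (f (n - 1)) = G.dualTail (f 0)

/-- all faces of `G` except the holes are triangles -/
def Triangulated (Holes : Set G.F) : Prop :=
  ∀ f, f ∉ Holes → Set.ncard {a : G.A | G.left a = f} = 3

/-- the cell of the site `s₁` in the additively weighted Voronoi diagram of the three
sites `s₁, s₂, s₃` with respective weights `w₁, w₂, w₃` -/
def cell3 (d : G.V → G.V → ℝ) (s₁ s₂ s₃ : G.V) (w₁ w₂ w₃ : ℝ) : Set G.V :=
  {w | w₁ + d s₁ w < w₂ + d s₂ w ∧ w₁ + d s₁ w < w₃ + d s₃ w}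

/-- `f` is a trichromatic face of `VD_x`, the Voronoi diagram of the sites `r, g, b` with
respective weights `x, ωg, ωb`: it is incident to a vertex of each of the three cells -/
def Trichromatic3 (d : G.V → G.V → ℝ) (r g b : G.V) (x ωg ωb : ℝ) (f : G.F) : Prop :=
  (∃ p ∈ G.cell3 d r g b x ωg ωb, G.Incident p f) ∧
  (∃ p ∈ G.cell3 d g r b ωg x ωb, G.Incident p f) ∧
  (∃ p ∈ G.cell3 d b r g ωb x ωg, G.Incident p f)

/-- `δ̃^{rc}(w) = ω(c) + d(c,w) - d(r,w)` and `Δ^r(w) = min (δ̃^{rg}(w)) (δ̃^{rb}(w))`: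
the largest weight that can be assigned to `r` so that `w` is in the cell of `r` -/
def DeltaVertex (d : G.V → G.V → ℝ) (r g b : G.V) (ωg ωb : ℝ) (w : G.V) : ℝ :=
  min (ωg + d g w - d r w) (ωb + d b w - d r w)

/-- `Δ^r` of an arc: the maximum of `Δ^r` over its two endpoints (also the value
attached to the dual arc) -/
def DeltaArc (d : G.V → G.V → ℝ) (r g b : G.V) (ωg ωb : ℝ) (a : G.A) : ℝ :=
  max (G.DeltaVertex d r g b ωg ωb (G.tail a)) (G.DeltaVertex d r g b ωg ωb (G.head a))

/-- `T` is (the arc set of) the shortest-path tree of `G` rooted at `c`,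
oriented away from the root -/
def IsSPTree (len : G.A → ℝ) (d : G.V → G.V → ℝ) (c : G.V) (T : Set G.A) : Prop :=
  (∀ a ∈ T, d c (G.head a) = d c (G.tail a) + len a) ∧
  (∀ a ∈ T, G.rev a ∉ T) ∧
  (∀ w : G.V, w ≠ c → ∃! a, a ∈ T ∧ G.head a = w) ∧
  (∀ a ∈ T, G.head a ≠ c)

/-- the number of edges on the path between two dual vertices in the cotree of `T`
(the spanning tree of the dual formed by the duals of the edges not in `T`) -/
noncomputable def cotreeDist (T : Set G.A) (φ ψ : G.F) : ℕ :=
  sInf {n : ℕ | ∃ p : List G.A,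
    G.IsDualWalk {a : G.A | a ∉ T ∧ G.rev a ∉ T} p φ ψ ∧ p.length = n}

/-- the dart scanned after `a` in a counterclockwise-first depth-first traversal of the
spanning tree `T`: tree darts are traversed and the scan resumes counterclockwise after the
reverse dart; non-tree darts are skipped -/
noncomputable def dfsNext (T : Set G.A) (a : G.A) : G.A :=
  if a ∈ T ∨ G.rev a ∈ T then G.rot (G.rev a) else G.rot a

/-- `pre` is the preorder labeling of all arcs of `G` (equivalently, of the artificial
leaves `x_{uv}` attached immediately before each arc `uv`) induced by a
counterclockwise-first depth-first search of the tree `T` rooted at `c`,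
started from the dart `a₀` -/
def IsCCWPreorder (T : Set G.A) (c : G.V) (a₀ : G.A) (pre : G.A → ℕ) : Prop :=
  G.tail a₀ = c ∧ pre a₀ = 0 ∧ Function.Injective pre ∧
  (∀ a : G.A, pre a < Fintype.card G.A) ∧
  ∀ a : G.A, (G.dfsNext T)^[pre a] a₀ = a

/-- the successor of an arc in the boundary walk of the face to its left -/
def faceNext (a : G.A) : G.A := G.rot (G.rev a)

/-- the number of face-walk steps from the arc `a` to the arc `b` (both on the boundary of
the same face), i.e. the position of `b` in the boundary walk of the face starting at `a` -/
noncomputable def faceIdx (a b : G.A) : ℕ :=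
  if h : ∃ k : ℕ, (G.faceNext)^[k] a = b then Nat.find h else 0

/-- the sets of vertices `S` and `S'` are separated along the boundary of the face `h`:
going around `h` starting from some boundary arc, all occurrences of vertices of `S`
come before all occurrences of vertices of `S'` -/
def SeparatedAlong (h : G.F) (S S' : Set G.V) : Prop :=
  ∃ a₀, G.left a₀ = h ∧ ∃ m : ℕ,
    (∀ b, G.left b = h → G.tail b ∈ S → G.faceIdx a₀ b < m) ∧
    (∀ b, G.left b = h → G.tail b ∈ S' → m ≤ G.faceIdx a₀ b)

/-- the bisector `β*(S₁,S₂)`: duals of arcs whose tail lies in the cell of a site of `S₁`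
and whose head lies in the cell of a site of `S₂`, in the diagram `VD(S₁ ∪ S₂, ω)` -/
def groupBisector (d : G.V → G.V → ℝ) (S₁ S₂ : Set G.V) (ω : G.V → ℝ) : Set G.A :=
  {a : G.A | (∃ s ∈ S₁, G.tail a ∈ G.VorCell d (S₁ ∪ S₂) ω s) ∧
             (∃ s ∈ S₂, G.head a ∈ G.VorCell d (S₁ ∪ S₂) ω s)}

/-- `z` lies strictly between `x` and `y` in the boundary walk of their common face -/
def StrictBetween (x y z : G.A) : Prop :=
  0 < G.faceIdx x z ∧ G.faceIdx x z < G.faceIdx x y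

/-- the closed dual walk enumerated by `f` (cyclically, of length `n`) is non-self-crossing:
at every dual vertex visited more than once, the passages through it do not interleave in
the rotation around that dual vertex -/
def EnumNonSelfCrossing (f : ℕ → G.A) (n : ℕ) : Prop :=
  ∀ i j, i < n → j < n → i ≠ j →
    G.dualHead (f i) = G.dualHead (f j) →
    (G.StrictBetween (G.rev (f i)) (f ((i + 1) % n)) (G.rev (f j)) ↔
     G.StrictBetween (G.rev (f i)) (f ((i + 1) % n)) (f ((j + 1) % n)))

/-- a face of `G` belongs to a set `Vor` of vertices if all its incident vertices do -/
def FaceBelongs (Vor : Set G.V) (f : G.F) : Prop := ∀ w : G.V, G.Incident w f → w ∈ Vor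

/-- the dual arc `a* = f*g*` penetrates `Vor*` at the cycle `C`: the face `f` does not
belong to `Vor`, the face `g` does, and `f*` is a vertex of `C` -/
def PenetratesAt (Vor : Set G.V) (C : Set G.A) (a : G.A) : Prop :=
  ¬ G.FaceBelongs Vor (G.dualTail a) ∧ G.FaceBelongs Vor (G.dualHead a) ∧
  ∃ b ∈ C, G.DualIncident b (G.dualTail a)

/-- the dual arc `a* = f*g*` exits `Vor*` at the cycle `C`: the reversed arc `g*f*`
penetrates at `C` -/
def ExitsAt (Vor : Set G.V) (C : Set G.A) (a : G.A) : Prop :=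
  G.FaceBelongs Vor (G.dualTail a) ∧ ¬ G.FaceBelongs Vor (G.dualHead a) ∧
  ∃ b ∈ C, G.DualIncident b (G.dualHead a)

/-- `K` is a connected component of the complement of the vertex set `Vor` -/
def IsCompOfComplement (Vor K : Set G.V) : Prop :=
  ∃ x, x ∉ Vor ∧ K = {y | Relation.ReflTransGen
    (fun p q => p ∉ Vor ∧ q ∉ Vor ∧ ∃ a : G.A, G.tail a = p ∧ G.head a = q) x y}

/-- the boundary cycle of `Vor*` separating `Vor` from the complement component `K` -/
def boundaryCycle (Vor K : Set G.V) : Set G.A :=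
  {a : G.A | G.tail a ∈ Vor ∧ G.head a ∈ K}

/-- the set `𝒞*` of boundary cycles of `Vor*` -/
def boundaryCycles (Vor : Set G.V) : Set (Set G.A) :=
  {C | ∃ K : Set G.V, G.IsCompOfComplement Vor K ∧ C = G.boundaryCycle Vor K}

/-- `Tstar` is the cotree of the (primal) spanning tree `T`, i.e. the spanning tree of the
dual formed by the duals of the edges of `G` not in `T`, oriented away from `root` -/
def IsCotree (T Tstar : Set G.A) (root : G.F) : Prop :=
  (∀ a ∈ Tstar, a ∉ T ∧ G.rev a ∉ T) ∧
  (∀ a ∈ Tstar, G.rev a ∉ Tstar) ∧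
  (∀ a : G.A, a ∉ T → G.rev a ∉ T → (a ∈ Tstar ∨ G.rev a ∈ Tstar)) ∧
  (∀ φ : G.F, φ ≠ root → ∃! a, a ∈ Tstar ∧ G.dualHead a = φ) ∧
  (∀ a ∈ Tstar, G.dualHead a ≠ root) ∧
  (∀ φ : G.F, ∃ p : List G.A, G.IsDualWalk Tstar p root φ)

end PlanarGraph

/-!
Let `e*` be an arc of `T*` whose two primal endpoints lie in `Vor(v)`; both an arc penetrating
`Vor*(v)` (its head face belongs to `Vor(v)`) and an arc exiting it (its tail face does) are of
this kind. No arc `z` with tail outside `Vor(v)` separates the faces below `e*` in `T*` from the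
others: for `z` a cotree arc other than `e` this is the tree structure of `T*`; for `z` an arc of
`T`, a parity count over the arcs leaving the subtree of `T` under `z` shows that this subtree
would contain an endpoint of `e`, which puts the endpoints of `z` into `Vor(v)`, a set closed
under taking ancestors in the shortest-path tree. The rotation around each vertex is a single
cycle (by the genus inequality for the permutations `rot` and `rev` and Euler's formula), so all
faces incident to the component of the complement of `Vor(v)` bounded by `C*₀` lie on the side of
`h∞*`, that is, not below `e*`. A later arc penetrating at `C*₀`, or the exiting arc itself, would
have its tail, respectively its head, at such a face below `e*`.
-/

section ClassCount

open Relation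

variable {α : Type*}

noncomputable def classCount (r : α → α → Prop) : ℕ := Nat.card (Quot r)

def addPair (r : α → α → Prop) (x y : α) (a b : α) : Prop := r a b ∨ a = x ∧ b = y

/-- Left inverse, away from the class of `y`, of the projection `Quot r → Quot (addPair r x y)`:
it sends the class of `y` to the `r`-class of `x`. -/
noncomputable def collapsePair (r : α → α → Prop) (x y : α) : Quot (addPair r x y) → Quot r :=
  Quot.lift (fun a => if EqvGen r a y then Quot.mk r x else Quot.mk r a) <| by
    rintro a b (hab | ⟨rfl, rfl⟩)
    · have hab : EqvGen r a b := .rel _ _ hab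
      by_cases ha : EqvGen r a y
      · rw [if_pos ha, if_pos ((hab.symm _ _).trans _ _ _ ha)]
      · rw [if_neg ha, if_neg fun hb => ha (hab.trans _ _ _ hb), Quot.eqvGen_sound hab]
    · rw [if_pos (EqvGen.refl _)]
      split_ifs <;> rfl

theorem collapsePair_factor {r : α → α → Prop} {x y : α} {q : Quot r} (hq : q ≠ Quot.mk r y) :
    collapsePair r x y (Quot.factor _ _ (fun _ _ => Or.inl) q) = q := by
  obtain ⟨a, rfl⟩ := Quot.mk_surjective q
  change (if EqvGen r a y then _ else _) = _
  exact if_neg fun h => hq (Quot.eqvGen_sound h)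

noncomputable def dropClass (r : α → α → Prop) (x y : α) (q : Quot r) :
    Option (Quot (addPair r x y)) :=
  if q = Quot.mk r y then none else some (Quot.factor _ _ (fun _ _ => Or.inl) q)

theorem dropClass_injective (r : α → α → Prop) (x y : α) :
    Function.Injective (dropClass r x y) := by
  intro q₁ q₂ h
  simp only [dropClass] at h
  split_ifs at h with h₁ h₂ h₂
  · rw [h₁, h₂]
  · rw [← collapsePair_factor h₁, ← collapsePair_factor h₂, Option.some_inj.1 h]

variable [Finite α]

theorem classCount_le_of_le {r p : α → α → Prop} (h : ∀ a b, r a b → EqvGen p a b) :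
    classCount p ≤ classCount r :=
  Nat.card_le_card_of_surjective
    (Quot.lift (Quot.mk p) fun a b hab => Quot.eqvGen_sound (h a b hab))
    fun q => by obtain ⟨a, rfl⟩ := Quot.mk_surjective q; exact ⟨Quot.mk r a, rfl⟩

theorem classCount_congr {r p : α → α → Prop} (h₁ : ∀ a b, r a b → EqvGen p a b)
    (h₂ : ∀ a b, p a b → EqvGen r a b) : classCount r = classCount p :=
  (classCount_le_of_le h₂).antisymm (classCount_le_of_le h₁)

theorem classCount_le_card (r : α → α → Prop) : classCount r ≤ Nat.card α :=
  Nat.card_le_card_of_surjective _ Quot.mk_surjective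

theorem classCount_addPair_of_eqvGen {r : α → α → Prop} {x y : α} (h : EqvGen r x y) :
    classCount (addPair r x y) = classCount r :=
  classCount_congr (fun _ _ => by rintro (hab | ⟨rfl, rfl⟩); exacts [.rel _ _ hab, h])
    fun _ _ hab => .rel _ _ (Or.inl hab)

theorem classCount_le_addPair_add_one (r : α → α → Prop) (x y : α) :
    classCount r ≤ classCount (addPair r x y) + 1 := by
  simpa [classCount, Finite.card_option] using
    Nat.card_le_card_of_injective _ (dropClass_injective r x y)

theorem classCount_eq_addPair_add_one {r : α → α → Prop} {x y : α} (h : ¬ EqvGen r x y) :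
    classCount r = classCount (addPair r x y) + 1 := by
  have hsurj : Function.Surjective (dropClass r x y) := by
    rintro (_ | q)
    · exact ⟨Quot.mk r y, by rw [dropClass, if_pos rfl]⟩
    obtain ⟨a, rfl⟩ := Quot.mk_surjective q
    by_cases ha : EqvGen r a y
    · refine ⟨Quot.mk r x, ?_⟩
      rw [dropClass, if_neg fun hx => h (Quot.eqvGen_exact hx)]
      have hxy : EqvGen (addPair r x y) x y := .rel _ _ (Or.inr ⟨rfl, rfl⟩)
      have hay : EqvGen (addPair r x y) a y := EqvGen.mono (fun _ _ => Or.inl) _ _ ha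
      exact congrArg some (Quot.eqvGen_sound (hxy.trans _ _ _ (hay.symm _ _)))
    · exact ⟨Quot.mk r a, by rw [dropClass, if_neg fun h' => ha (Quot.eqvGen_exact h')]; rfl⟩
  simpa [classCount, Finite.card_option] using
    Nat.card_eq_of_bijective _ ⟨dropClass_injective r x y, hsurj⟩

end ClassCount

namespace Equiv.Perm

open Relation

variable {α : Type*}

/-- The number of cycles of `σ`, fixed points included. -/
noncomputable def cycleCount (σ : Perm α) : ℕ := classCount fun a b => σ a = b

noncomputable def jointCount (σ τ : Perm α) : ℕ := classCount fun a b => σ a = b ∨ τ a = b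

theorem sameCycle_of_eqvGen {σ : Perm α} {x y : α} (h : EqvGen (fun a b => σ a = b) x y) :
    σ.SameCycle x y := by
  induction h with
  | rel a b h => exact ⟨1, by rw [zpow_one, h]⟩
  | refl a => exact SameCycle.refl σ a
  | symm _ _ _ ih => exact ih.symm
  | trans _ _ _ _ _ ih₁ ih₂ => exact ih₁.trans ih₂

theorem eqvGen_pow_apply (σ : Perm α) (a : α) (n : ℕ) :
    EqvGen (fun a b => σ a = b) a ((σ ^ n) a) := by
  induction n with
  | zero => exact .refl a
  | succ n ih => rw [pow_succ', Perm.mul_apply]; exact ih.trans _ _ _ (.rel _ _ rfl)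

theorem pow_apply_eq_of_forall_lt {σ τ : Perm α} {a : α} {n : ℕ}
    (h : ∀ j < n, τ ((σ ^ j) a) = σ ((σ ^ j) a)) : (τ ^ n) a = (σ ^ n) a := by
  induction n with
  | zero => rfl
  | succ n ih =>
    rw [pow_succ', pow_succ', Perm.mul_apply, Perm.mul_apply,
      ih fun j hj => h j (by omega), h n (by omega)]

theorem eq_iff_of_eqvGen_of_apply_eq_self {σ : Perm α} {y a b : α} (hy : σ y = y)
    (h : EqvGen (fun a b => σ a = b) a b) : a = y ↔ b = y := by
  induction h with
  | rel a b hab => rw [← hab, ← σ.injective.eq_iff, hy]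
  | refl => rfl
  | symm _ _ _ ih => exact ih.symm
  | trans _ _ _ _ _ ih₁ ih₂ => exact ih₁.trans ih₂

theorem eqvGen_iff_of_involutive {σ : Perm α} (hσ : Function.Involutive σ) {a b : α} :
    EqvGen (fun a b => σ a = b) a b ↔ b = a ∨ b = σ a := by
  refine ⟨fun h => ?_, by rintro (rfl | rfl); exacts [.refl _, .rel _ _ rfl]⟩
  induction h with
  | rel _ _ h => exact Or.inr h.symm
  | refl => exact Or.inl rfl
  | symm a b _ ih => rcases ih with rfl | rfl; exacts [Or.inl rfl, Or.inr (hσ a).symm]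
  | trans a b c _ _ ih₁ ih₂ =>
    rcases ih₁ with rfl | rfl <;> rcases ih₂ with rfl | rfl
    exacts [Or.inl rfl, Or.inr rfl, Or.inr rfl, Or.inl (hσ a)]

theorem card_eq_two_mul_cycleCount [Finite α] {σ : Perm α} (hσ : Function.Involutive σ)
    (hfree : ∀ a, σ a ≠ a) : Nat.card α = 2 * cycleCount σ := by
  have := Fintype.ofFinite (Quot fun a b => σ a = b)
  have hfiber : ∀ q : Quot (fun a b => σ a = b), Nat.card {a // Quot.mk _ a = q} = 2 := by
    intro q
    obtain ⟨b, rfl⟩ := Quot.mk_surjective q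
    refine Nat.card_eq_two_iff.2 ⟨⟨b, rfl⟩, ⟨σ b, Quot.sound (hσ b)⟩,
      fun h => hfree b (congrArg Subtype.val h).symm, Set.eq_univ_of_forall fun ⟨a, ha⟩ => ?_⟩
    rcases (eqvGen_iff_of_involutive hσ).1 (Quot.eqvGen_exact ha.symm) with rfl | rfl <;> simp
  rw [← Nat.card_congr (Equiv.sigmaFiberEquiv (Quot.mk fun a b => σ a = b)), Nat.card_sigma]
  simp [hfiber, cycleCount, classCount, Nat.card_eq_fintype_card, mul_comm]

theorem cycleCount_one : cycleCount (1 : Perm α) = Nat.card α := by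
  refine Nat.card_eq_of_bijective _ ⟨fun a b h => ?_, Quot.mk_surjective⟩ |>.symm
  simpa using eq_iff_of_eqvGen_of_apply_eq_self (σ := 1) (y := b) rfl (Quot.eqvGen_exact h)

theorem jointCount_one [Finite α] (σ : Perm α) : jointCount σ 1 = cycleCount σ :=
  classCount_congr
    (fun a b => by rintro (h | rfl); exacts [.rel _ _ h, .refl a])
    fun _ _ h => .rel _ _ (Or.inl h)

section Swap

variable [DecidableEq α]

theorem eqvGen_mul_swap_apply {r : α → α → Prop} {ρ : Perm α} {x y : α}
    (hρ : ∀ a, EqvGen r a (ρ a)) (hxy : EqvGen r x y) (a : α) :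
    EqvGen r a ((ρ * swap x y) a) := by
  rw [Perm.mul_apply]
  rcases eq_or_ne a x with rfl | hax
  · rw [swap_apply_left]; exact hxy.trans _ _ _ (hρ y)
  rcases eq_or_ne a y with rfl | hay
  · rw [swap_apply_right]; exact (hxy.symm _ _).trans _ _ _ (hρ x)
  · rw [swap_apply_of_ne_of_ne hax hay]; exact hρ a

theorem addPair_le_eqvGen_addPair_mul_swap (ρ : Perm α) (x y : α) (a b : α)
    (h : addPair (fun a b => ρ a = b) x y a b) :
    EqvGen (addPair (fun a b => (ρ * swap x y) a = b) x y) a b := by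
  rcases h with rfl | ⟨rfl, rfl⟩
  · have := eqvGen_mul_swap_apply (r := addPair (fun a b => (ρ * swap x y) a = b) x y)
      (fun a => .rel _ _ (Or.inl rfl)) (.rel _ _ (Or.inr ⟨rfl, rfl⟩)) a
    rwa [mul_swap_mul_self] at this
  · exact .rel _ _ (Or.inr ⟨rfl, rfl⟩)

variable [Finite α]

theorem classCount_addPair_mul_swap (ρ : Perm α) (x y : α) :
    classCount (addPair (fun a b => ρ a = b) x y)
      = classCount (addPair (fun a b => (ρ * swap x y) a = b) x y) := by
  refine classCount_congr (addPair_le_eqvGen_addPair_mul_swap ρ x y) fun a b h => ?_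
  simpa only [mul_swap_mul_self] using addPair_le_eqvGen_addPair_mul_swap _ x y a b h

/-- `ρ * swap x y` sends `y` to `ρ x` and from there follows the `ρ`-cycle of `x`, which avoids
`y`, back to `x`. -/
theorem eqvGen_mul_swap_of_not_eqvGen {ρ : Perm α} {x y : α}
    (h : ¬ EqvGen (fun a b => ρ a = b) x y) :
    EqvGen (fun a b => (ρ * swap x y) a = b) x y := by
  have hret : ∃ n, (ρ ^ n) (ρ x) = x :=
    ⟨orderOf ρ - 1, by rw [← Perm.mul_apply, pow_sub_one_mul (orderOf_pos ρ).ne',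
      pow_orderOf_eq_one, Perm.one_apply]⟩
  have hagree : ∀ j < Nat.find hret,
      (ρ * swap x y) ((ρ ^ j) (ρ x)) = ρ ((ρ ^ j) (ρ x)) := fun j hj => by
    have hy : (ρ ^ j) (ρ x) ≠ y := fun hy => h <| by
      simpa only [← hy, ← Perm.mul_apply, ← pow_succ] using eqvGen_pow_apply ρ x (j + 1)
    rw [Perm.mul_apply, swap_apply_of_ne_of_ne (Nat.find_min hret hj) hy]
  have hyx : ((ρ * swap x y) ^ Nat.find hret) (ρ x) = x := by
    rw [pow_apply_eq_of_forall_lt hagree, Nat.find_spec hret]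
  have hy : EqvGen (fun a b => (ρ * swap x y) a = b) y (ρ x) :=
    .rel _ _ (by rw [Perm.mul_apply, swap_apply_right])
  have hcycle := eqvGen_pow_apply (ρ * swap x y) (ρ x) (Nat.find hret)
  rw [hyx] at hcycle
  exact (hy.trans _ _ _ hcycle).symm _ _

theorem cycleCount_eq_mul_swap_add_one {ρ : Perm α} {x y : α}
    (h : ¬ EqvGen (fun a b => ρ a = b) x y) :
    cycleCount ρ = cycleCount (ρ * swap x y) + 1 := by
  rw [cycleCount, classCount_eq_addPair_add_one h, classCount_addPair_mul_swap,
    classCount_addPair_of_eqvGen (eqvGen_mul_swap_of_not_eqvGen h), cycleCount]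

theorem cycleCount_mul_swap_le (ρ : Perm α) (x y : α) :
    cycleCount (ρ * swap x y) ≤ cycleCount ρ + 1 :=
  calc cycleCount (ρ * swap x y)
      ≤ classCount (addPair (fun a b => (ρ * swap x y) a = b) x y) + 1 :=
        classCount_le_addPair_add_one _ x y
    _ = classCount (addPair (fun a b => ρ a = b) x y) + 1 := by
        rw [classCount_addPair_mul_swap ρ]
    _ ≤ cycleCount ρ + 1 := by
        gcongr; exact classCount_le_of_le fun _ _ h => .rel _ _ (Or.inl h)

theorem cycleCount_mul_swap_apply {τ : Perm α} {x : α} (hx : τ x ≠ x) :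
    cycleCount (τ * swap x (τ x)) = cycleCount τ + 1 := by
  have hfix : (τ * swap x (τ x)) (τ x) = τ x := by rw [Perm.mul_apply, swap_apply_right]
  have hsplit : ¬ EqvGen (fun a b => (τ * swap x (τ x)) a = b) x (τ x) := fun h =>
    hx ((eq_iff_of_eqvGen_of_apply_eq_self hfix h).2 rfl).symm
  rw [cycleCount_eq_mul_swap_add_one hsplit, mul_swap_mul_self]
theorem jointCount_eq_classCount_addPair_mul_swap (σ τ : Perm α) (x : α) :
    jointCount σ τ
      = classCount (addPair (fun a b => σ a = b ∨ (τ * swap x (τ x)) a = b) x (τ x)) := by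
  refine classCount_congr (fun a b => ?_) fun a b => ?_
  · rintro (rfl | rfl)
    · exact .rel _ _ (Or.inl (Or.inl rfl))
    · simpa only [mul_swap_mul_self] using eqvGen_mul_swap_apply
        (r := addPair (fun a b => σ a = b ∨ (τ * swap x (τ x)) a = b) x (τ x))
        (fun a => .rel _ _ (Or.inl (Or.inr rfl))) (.rel _ _ (Or.inr ⟨rfl, rfl⟩)) a
  · rintro ((rfl | rfl) | ⟨rfl, rfl⟩)
    · exact .rel _ _ (Or.inl rfl)
    · exact eqvGen_mul_swap_apply (r := fun a b => σ a = b ∨ τ a = b)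
        (fun a => .rel _ _ (Or.inr rfl)) (.rel _ _ (Or.inr rfl)) a
    · exact .rel _ _ (Or.inr rfl)

/-- With `τ' = τ * swap x (τ x)`: if `x` and `τ x` stay in one orbit of `⟨σ, τ'⟩`, then `σ * τ`
has at most one cycle more than `σ * τ'`; otherwise that orbit splits in two and `σ * τ'` has
one cycle more than `σ * τ`. -/
theorem cycleCount_mul_add_two_mul_jointCount_le (σ τ : Perm α) (x : α) :
    cycleCount (σ * τ) + 2 * jointCount σ (τ * swap x (τ x))
      ≤ cycleCount (σ * (τ * swap x (τ x))) + 2 * jointCount σ τ + 1 := by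
  have hJ := jointCount_eq_classCount_addPair_mul_swap σ τ x
  set τ' := τ * swap x (τ x)
  have hστ : σ * τ = σ * τ' * swap x (τ x) := by rw [mul_assoc, mul_swap_mul_self]
  by_cases hjoin : EqvGen (fun a b => σ a = b ∨ τ' a = b) x (τ x)
  · rw [classCount_addPair_of_eqvGen hjoin] at hJ
    change _ = jointCount σ τ' at hJ
    have := cycleCount_mul_swap_le (σ * τ') x (τ x)
    rw [← hστ] at this
    omega
  · have hstep : ∀ a, EqvGen (fun a b => σ a = b ∨ τ' a = b) a ((σ * τ') a) := fun a =>
      (EqvGen.rel a (τ' a) (Or.inr rfl)).trans _ _ _ (.rel _ _ (Or.inl rfl))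
    have hsplit : ¬ EqvGen (fun a b => (σ * τ') a = b) x (τ x) := fun h =>
      hjoin (EqvGen.eqvGen_le (r' := EqvGen _) (fun a _ hab => hab ▸ hstep a) _ _ h)
    have hJ' : jointCount σ τ' = _ := classCount_eq_addPair_add_one hjoin
    have := cycleCount_eq_mul_swap_add_one hsplit
    rw [← hστ] at this
    omega

end Swap

/-- The genus of the hypermap `(σ, τ)` is nonnegative. -/
theorem cycleCount_add_cycleCount_add_cycleCount_mul_le [Finite α] (σ τ : Perm α) :
    cycleCount σ + cycleCount τ + cycleCount (σ * τ) ≤ Nat.card α + 2 * jointCount σ τ := by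
  classical
  induction hm : Nat.card α - cycleCount τ using Nat.strong_induction_on generalizing τ with
  | _ m ih =>
  by_cases hτ : τ = 1
  · subst hτ
    rw [cycleCount_one, mul_one, jointCount_one]
    omega
  obtain ⟨x, hx⟩ : ∃ x, τ x ≠ x := not_forall.1 fun h => hτ (Equiv.ext h)
  have hsplit := cycleCount_mul_swap_apply hx
  have hle : cycleCount (τ * swap x (τ x)) ≤ Nat.card α := classCount_le_card _
  have := ih _ (by omega) (τ * swap x (τ x)) rfl
  have := cycleCount_mul_add_two_mul_jointCount_le σ τ x
  omega

theorem cycleCount_add_cycleCount_add_cycleCount_mul_le_of_connected [Finite α] (σ τ : Perm α)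
    (h : ∀ a b, EqvGen (fun a b => σ a = b ∨ τ a = b) a b) :
    cycleCount σ + cycleCount τ + cycleCount (σ * τ) ≤ Nat.card α + 2 := by
  have : jointCount σ τ ≤ 1 := Finite.card_le_one_iff_subsingleton.2
    ⟨fun p q => by
      obtain ⟨a, rfl⟩ := Quot.mk_surjective p
      obtain ⟨b, rfl⟩ := Quot.mk_surjective q
      exact Quot.eqvGen_sound (h a b)⟩
  have := cycleCount_add_cycleCount_add_cycleCount_mul_le σ τ
  omega

end Equiv.Perm

namespace PlanarGraph

open Relation Equiv

variable (G : PlanarGraph)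

theorem head_rev (a : G.A) : G.head (G.rev a) = G.tail a := by
  rw [← G.tail_rev, G.rev_rev]

theorem left_rev (a : G.A) : G.left (G.rev a) = G.right a := rfl

theorem right_rev (a : G.A) : G.right (G.rev a) = G.left a := by
  rw [right, G.rev_rev]

theorem left_rot (a : G.A) : G.left (G.rot a) = G.right a := by
  conv_lhs => rw [← G.rev_rev a]
  exact G.left_faceNext (G.rev a)

theorem tail_rot_pow (n : ℕ) (a : G.A) : G.tail ((G.rot ^ n) a) = G.tail a := by
  induction n with
  | zero => rfl
  | succ n ih => rw [pow_succ', Perm.mul_apply, G.tail_rot, ih]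

theorem incident_tail_left (a : G.A) : G.Incident (G.tail a) (G.left a) := ⟨a, rfl, rfl⟩

theorem incident_head_left (a : G.A) : G.Incident (G.head a) (G.left a) :=
  ⟨G.rot (G.rev a), by rw [G.tail_rot, G.tail_rev], G.left_faceNext a⟩

theorem incident_tail_right (a : G.A) : G.Incident (G.tail a) (G.right a) :=
  ⟨G.rot a, G.tail_rot a, G.left_rot a⟩

theorem incident_head_right (a : G.A) : G.Incident (G.head a) (G.right a) :=
  ⟨G.rev a, G.tail_rev a, rfl⟩

theorem incident_head_of_dualIncident {b : G.A} {ψ : G.F} (h : G.DualIncident b ψ) :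
    G.Incident (G.head b) ψ := by
  rcases h with rfl | rfl
  exacts [G.incident_head_left b, G.incident_head_right b]

theorem exists_tail_eq [Nonempty G.F] (w : G.V) : ∃ a, G.tail a = w := by
  obtain ⟨a₀, -⟩ := G.left_surjective (Classical.arbitrary G.F)
  rcases (G.connected (G.tail a₀) w).cases_tail with h | ⟨_, -, a, -, ha⟩
  · exact ⟨a₀, h.symm⟩
  · exact ⟨G.rev a, by rw [G.tail_rev, ha]⟩

def revPerm : Perm G.A := ⟨G.rev, G.rev, G.rev_rev, G.rev_rev⟩

theorem cycleCount_rot_mul_revPerm : (G.rot * G.revPerm).cycleCount = Nat.card G.F := by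
  have hleft : ∀ a b, (G.rot * G.revPerm) a = b → G.left a = G.left b :=
    fun a _ h => h ▸ (G.left_faceNext a).symm
  refine Nat.card_eq_of_bijective (Quot.lift G.left hleft) ⟨fun p q h => ?_, fun φ => ?_⟩
  · obtain ⟨a, rfl⟩ := Quot.mk_surjective p
    obtain ⟨b, rfl⟩ := Quot.mk_surjective q
    obtain ⟨n, hn⟩ := G.face_orbit a b h
    rw [show (fun x => G.rot (G.rev x)) = ⇑(G.rot * G.revPerm) from rfl,
      Perm.iterate_eq_pow] at hn
    exact Quot.eqvGen_sound (hn ▸ Perm.eqvGen_pow_apply _ a n)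
  · obtain ⟨a, rfl⟩ := G.left_surjective φ
    exact ⟨Quot.mk _ a, rfl⟩

theorem eqvGen_rot_revPerm_rev (a : G.A) :
    EqvGen (fun a b => G.rot a = b ∨ G.revPerm a = b) a (G.rev a) :=
  .rel _ _ (Or.inr rfl)

theorem eqvGen_rot_revPerm_faceNext (a : G.A) :
    EqvGen (fun a b => G.rot a = b ∨ G.revPerm a = b) a (G.rot (G.rev a)) :=
  (G.eqvGen_rot_revPerm_rev a).trans _ _ _ (.rel _ _ (Or.inl rfl))

theorem eqvGen_rot_revPerm_of_left_eq {x y : G.A} (h : G.left x = G.left y) :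
    EqvGen (fun a b => G.rot a = b ∨ G.revPerm a = b) x y := by
  obtain ⟨n, rfl⟩ := G.face_orbit x y h
  clear h
  induction n with
  | zero => exact .refl x
  | succ n ih =>
    rw [Function.iterate_succ_apply']
    exact ih.trans _ _ _ (G.eqvGen_rot_revPerm_faceNext _)

theorem eqvGen_rot_revPerm_of_isDualWalk {s : Set G.A} {p : List G.A} {φ ψ : G.F}
    (hp : G.IsDualWalk s p φ ψ) {x y : G.A} (hx : G.left x = φ) (hy : G.left y = ψ) :
    EqvGen (fun a b => G.rot a = b ∨ G.revPerm a = b) x y := by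
  induction p generalizing φ x with
  | nil => exact G.eqvGen_rot_revPerm_of_left_eq (hx.trans (hp.trans hy.symm))
  | cons a p ih =>
    obtain ⟨-, ha, hp⟩ := hp
    exact (G.eqvGen_rot_revPerm_of_left_eq (hx.trans ha.symm)).trans _ _ _
      ((G.eqvGen_rot_revPerm_rev a).trans _ _ _ (ih hp (x := G.rev a) rfl))

/-- The rotation system describes a sphere: the genus inequality for `(rot, rev)` together
with Euler's formula leaves room for only one rotation cycle per vertex. -/
theorem exists_rot_pow_of_tail_eq {s : Set G.A} {root : G.F}
    (hdual : ∀ φ, ∃ p, G.IsDualWalk s p root φ) {x y : G.A} (h : G.tail x = G.tail y) :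
    ∃ n, (G.rot ^ n) x = y := by
  have hjoint : ∀ a b, EqvGen (fun a b => G.rot a = b ∨ G.revPerm a = b) a b := fun a b => by
    obtain ⟨p, hp⟩ := hdual (G.left a)
    obtain ⟨q, hq⟩ := hdual (G.left b)
    obtain ⟨c, hc⟩ := G.left_surjective root
    exact ((G.eqvGen_rot_revPerm_of_isDualWalk hp hc rfl).symm _ _).trans _ _ _
      (G.eqvGen_rot_revPerm_of_isDualWalk hq hc rfl)
  have hgenus := Perm.cycleCount_add_cycleCount_add_cycleCount_mul_le_of_connected _ _ hjoint
  have hedges := Perm.card_eq_two_mul_cycleCount (σ := G.revPerm) G.rev_rev G.rev_ne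
  have hfaces := G.cycleCount_rot_mul_revPerm
  have heuler := G.euler
  simp only [← Nat.card_eq_fintype_card] at heuler
  have hle : G.rot.cycleCount ≤ Nat.card G.V := by omega
  have htail : ∀ a b, G.rot a = b → G.tail a = G.tail b := fun a _ h => h ▸ (G.tail_rot a).symm
  have : Nonempty G.F := ⟨root⟩
  have hbij : Function.Bijective (Quot.lift G.tail htail) :=
    Function.Surjective.bijective_of_nat_card_le
      (fun w => let ⟨a, ha⟩ := G.exists_tail_eq w; ⟨Quot.mk _ a, ha⟩) hle
  exact (Perm.sameCycle_of_eqvGen (Quot.eqvGen_exact (hbij.1 h))).exists_nat_pow_eq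

def SameSide (P : G.F → Prop) (x : G.A) : Prop := P (G.left x) ↔ P (G.right x)

theorem sameSide_rev {P : G.F → Prop} {x : G.A} : G.SameSide P (G.rev x) ↔ G.SameSide P x := by
  rw [SameSide, SameSide, left_rev, right_rev]
  exact iff_comm

theorem iff_of_incident_of_sameSide {s : Set G.A} {root : G.F}
    (hdual : ∀ φ, ∃ p, G.IsDualWalk s p root φ) {P : G.F → Prop} {w : G.V}
    (hP : ∀ z, G.tail z = w → G.SameSide P z) {ψ ψ' : G.F} (hψ : G.Incident w ψ)
    (hψ' : G.Incident w ψ') : P ψ ↔ P ψ' := by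
  obtain ⟨x, rfl, rfl⟩ := hψ
  obtain ⟨y, hy, rfl⟩ := hψ'
  obtain ⟨n, rfl⟩ := G.exists_rot_pow_of_tail_eq hdual hy.symm
  induction n with
  | zero => rfl
  | succ n ih =>
    rw [pow_succ', Perm.mul_apply, G.left_rot]
    exact (ih (G.tail_rot_pow n x)).trans (hP _ (G.tail_rot_pow n x))

theorem iff_of_reflTransGen_of_sameSide {s : Set G.A} {root : G.F}
    (hdual : ∀ φ, ∃ p, G.IsDualWalk s p root φ) {P : G.F → Prop} {U : Set G.V}
    (hP : ∀ z, G.tail z ∉ U → G.SameSide P z) {x w : G.V} (hx : x ∉ U)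
    (h : ReflTransGen (fun p q => p ∉ U ∧ q ∉ U ∧ ∃ a, G.tail a = p ∧ G.head a = q) x w)
    {ψ ψ' : G.F} (hψ : G.Incident x ψ) (hψ' : G.Incident w ψ') : P ψ ↔ P ψ' := by
  induction h generalizing ψ' with
  | refl => exact G.iff_of_incident_of_sameSide hdual (fun z hz => hP z (hz ▸ hx)) hψ hψ'
  | tail _ hstep ih =>
    obtain ⟨-, hw, a, rfl, rfl⟩ := hstep
    exact (ih (G.incident_tail_left a)).trans <| G.iff_of_incident_of_sameSide hdual
      (fun z hz => hP z (hz ▸ hw)) (G.incident_head_left a) hψ'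

theorem isWalk_append {p q : List G.A} {u w z : G.V} (hp : G.IsWalk p u w)
    (hq : G.IsWalk q w z) : G.IsWalk (p ++ q) u z := by
  induction p generalizing u with
  | nil => exact (show u = w from hp) ▸ hq
  | cons a p ih => exact ⟨hp.1, ih hp.2⟩

theorem walkLen_append (len : G.A → ℝ) (p q : List G.A) :
    G.walkLen len (p ++ q) = G.walkLen len p + G.walkLen len q := by
  simp [walkLen]

theorem isWalk_singleton (a : G.A) : G.IsWalk [a] (G.tail a) (G.head a) := ⟨rfl, rfl⟩

theorem walkLen_singleton (len : G.A → ℝ) (a : G.A) : G.walkLen len [a] = len a := by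
  simp [walkLen]

theorem dist_head_le {len : G.A → ℝ} {d : G.V → G.V → ℝ} (hd : G.IsSPDist len d) (u : G.V)
    (a : G.A) : d u (G.head a) ≤ d u (G.tail a) + len a := by
  obtain ⟨p, hp, hlen⟩ := (hd u (G.tail a)).1
  have := (hd u (G.head a)).2 _ (G.isWalk_append hp (G.isWalk_singleton a))
  rwa [walkLen_append, hlen, walkLen_singleton] at this

def Adj (s : Set G.A) (u w : G.V) : Prop := ∃ a ∈ s, G.tail a = u ∧ G.head a = w

def DualAdj (s : Set G.A) (φ ψ : G.F) : Prop := ∃ a ∈ s, G.dualTail a = φ ∧ G.dualHead a = ψ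

namespace IsSPTree

variable {G} {len : G.A → ℝ} {d : G.V → G.V → ℝ} {c : G.V} {T : Set G.A}

theorem eq_of_head_eq (hT : G.IsSPTree len d c T) {a b : G.A} (ha : a ∈ T) (hb : b ∈ T)
    (h : G.head a = G.head b) : a = b :=
  (hT.2.2.1 _ (hT.2.2.2 a ha)).unique ⟨ha, rfl⟩ ⟨hb, h.symm⟩

theorem exists_walk (hT : G.IsSPTree len d c T) {u z : G.V} (h : ReflTransGen (G.Adj T) u z) :
    ∃ q, G.IsWalk q u z ∧ d c u + G.walkLen len q = d c z := by
  induction h with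
  | refl => exact ⟨[], rfl, by simp [walkLen]⟩
  | tail _ hstep ih =>
    obtain ⟨q, hq, hlen⟩ := ih
    obtain ⟨a, ha, rfl, rfl⟩ := hstep
    refine ⟨q ++ [a], G.isWalk_append hq (G.isWalk_singleton a), ?_⟩
    rw [walkLen_append, walkLen_singleton, hT.1 a ha, ← hlen, add_assoc]

theorem not_reflTransGen_head_tail (hT : G.IsSPTree len d c T) (hd : G.IsSPDist len d)
    (hup : G.UniqueShortestPaths len d) {a : G.A} (ha : a ∈ T) :
    ¬ ReflTransGen (G.Adj T) (G.head a) (G.tail a) := by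
  intro h
  obtain ⟨q, hq, hlen⟩ := hT.exists_walk h
  obtain ⟨p, hp, hplen⟩ := (hd c (G.head a)).1
  have hcycle := G.isWalk_append hp (G.isWalk_append hq (G.isWalk_singleton a))
  have := hup _ _ _ _ hp hcycle hplen <| by
    rw [walkLen_append, walkLen_append, walkLen_singleton, hplen]
    linarith [hT.1 a ha]
  simpa using congrArg List.length this

theorem tail_mem_vorCell (hT : G.IsSPTree len d c T) (hd : G.IsSPDist len d) {S : Set G.V}
    {ω : G.V → ℝ} {a : G.A} (ha : a ∈ T) (h : G.head a ∈ G.VorCell d S ω c) :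
    G.tail a ∈ G.VorCell d S ω c := by
  refine ⟨h.1, fun u hu hne => ?_⟩
  have := h.2 u hu hne
  have := G.dist_head_le hd u a
  have := hT.1 a ha
  linarith

theorem eq_of_mem_of_reflTransGen_head (hT : G.IsSPTree len d c T) {a b : G.A} (ha : a ∈ T)
    (hb : b ∈ T) (hhead : ReflTransGen (G.Adj T) (G.head a) (G.head b))
    (htail : ¬ ReflTransGen (G.Adj T) (G.head a) (G.tail b)) : b = a := by
  rcases hhead.cases_tail with h | ⟨z, hz, b', hb', rfl, hb'b⟩
  · exact hT.eq_of_head_eq hb ha h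
  · exact absurd (hT.eq_of_head_eq hb' hb hb'b ▸ hz) htail

end IsSPTree

theorem exists_isDualWalk_of_append {s : Set G.A} {p q : List G.A} {φ ψ : G.F}
    (h : G.IsDualWalk s (p ++ q) φ ψ) : ∃ χ, G.IsDualWalk s p φ χ ∧ G.IsDualWalk s q χ ψ := by
  induction p generalizing φ with
  | nil => exact ⟨φ, rfl, h⟩
  | cons a p ih =>
    obtain ⟨ha, hφ, h⟩ := h
    obtain ⟨χ, h₁, h₂⟩ := ih h
    exact ⟨χ, ⟨ha, hφ, h₁⟩, h₂⟩

theorem mem_of_isDualWalk {s : Set G.A} {p : List G.A} {φ ψ : G.F}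
    (hp : G.IsDualWalk s p φ ψ) {a : G.A} (ha : a ∈ p) : a ∈ s := by
  obtain ⟨l₁, l₂, rfl⟩ := List.append_of_mem ha
  exact (G.exists_isDualWalk_of_append hp).choose_spec.2.1

theorem reflTransGen_dualTail_of_mem {s : Set G.A} {p : List G.A} {φ ψ : G.F}
    (hp : G.IsDualWalk s p φ ψ) {a : G.A} (ha : a ∈ p) :
    ReflTransGen (G.DualAdj s) φ (G.dualTail a) := by
  induction p generalizing φ with
  | nil => exact absurd ha List.not_mem_nil
  | cons b p ih =>
    obtain ⟨hb, rfl, hp⟩ := hp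
    rcases List.mem_cons.1 ha with rfl | ha
    · exact .refl
    · exact .head ⟨b, hb, rfl, rfl⟩ (ih hp ha)

theorem eq_or_reflTransGen_of_mem {s : Set G.A} {p : List G.A} {φ ψ : G.F}
    (hp : G.IsDualWalk s p φ ψ) {a b : G.A} (ha : a ∈ p) (hb : b ∈ p) :
    a = b ∨ ReflTransGen (G.DualAdj s) (G.dualHead a) (G.dualTail b) ∨
      ReflTransGen (G.DualAdj s) (G.dualHead b) (G.dualTail a) := by
  induction p generalizing φ with
  | nil => exact absurd ha List.not_mem_nil
  | cons c p ih =>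
    obtain ⟨-, -, hp⟩ := hp
    rcases List.mem_cons.1 ha with rfl | ha' <;> rcases List.mem_cons.1 hb with rfl | hb'
    · exact Or.inl rfl
    · exact Or.inr (Or.inl (G.reflTransGen_dualTail_of_mem hp hb'))
    · exact Or.inr (Or.inr (G.reflTransGen_dualTail_of_mem hp ha'))
    · exact ih hp ha' hb'

namespace IsCotree

variable {G} {T Tstar : Set G.A} {root : G.F}

theorem mem_or_rev_mem (hTs : G.IsCotree T Tstar root) {a : G.A} (ha : a ∉ T)
    (hra : G.rev a ∉ T) : a ∈ Tstar ∨ G.rev a ∈ Tstar :=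
  hTs.2.2.1 a ha hra

theorem dualHead_ne_root (hTs : G.IsCotree T Tstar root) {a : G.A} (ha : a ∈ Tstar) :
    G.dualHead a ≠ root :=
  hTs.2.2.2.2.1 a ha

theorem eq_of_dualHead_eq (hTs : G.IsCotree T Tstar root) {a b : G.A} (ha : a ∈ Tstar)
    (hb : b ∈ Tstar) (h : G.dualHead a = G.dualHead b) : a = b :=
  (hTs.2.2.2.1 _ (hTs.dualHead_ne_root ha)).unique ⟨ha, rfl⟩ ⟨hb, h.symm⟩

theorem exists_isDualWalk (hTs : G.IsCotree T Tstar root) (φ : G.F) :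
    ∃ p, G.IsDualWalk Tstar p root φ :=
  hTs.2.2.2.2.2 φ

theorem eq_root_of_reflTransGen (hTs : G.IsCotree T Tstar root) {φ : G.F}
    (h : ReflTransGen (G.DualAdj Tstar) φ root) : φ = root := by
  rcases h.cases_tail with h | ⟨_, -, a, ha, -, h⟩
  exacts [h.symm, absurd h (hTs.dualHead_ne_root ha)]

theorem reflTransGen_dualTail_iff (hTs : G.IsCotree T Tstar root) {φ : G.F} {y : G.A}
    (hy : y ∈ Tstar) (hne : G.dualHead y ≠ φ) :
    ReflTransGen (G.DualAdj Tstar) φ (G.dualTail y) ↔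
      ReflTransGen (G.DualAdj Tstar) φ (G.dualHead y) := by
  refine ⟨fun h => h.tail ⟨y, hy, rfl, rfl⟩, fun h => ?_⟩
  rcases h.cases_tail with h | ⟨χ, hχ, y', hy', rfl, h⟩
  · exact absurd h hne
  · rwa [hTs.eq_of_dualHead_eq hy' hy h] at hχ

end IsCotree

section FundamentalCut

variable {len : G.A → ℝ} {d : G.V → G.V → ℝ} {c : G.V} {T Tstar : Set G.A}
  {root : G.F} {e : G.A}

theorem sum_leaving_eq_zero {β : Type*} [AddCommGroup β] (f : G.F → β) (X : Set G.V) :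
    ∑ x ∈ Finset.univ.filter (fun x => G.tail x ∈ X ∧ G.head x ∉ X),
      (f (G.left x) - f (G.right x)) = 0 := by
  have hall : ∑ x ∈ Finset.univ.filter (fun x => G.tail x ∈ X),
      (f (G.left x) - f (G.right x)) = 0 := by
    rw [Finset.sum_sub_distrib, sub_eq_zero]
    exact (Finset.sum_bijective G.rot G.rot.bijective (fun x => by simp [G.tail_rot])
      fun x _ => by rw [G.left_rot]).symm
  have hinside : ∑ x ∈ Finset.univ.filter (fun x => G.tail x ∈ X ∧ G.head x ∈ X),
      (f (G.left x) - f (G.right x)) = 0 :=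
    Finset.sum_involution (fun x _ => G.rev x) (fun x _ => by rw [left_rev, right_rev]; abel)
      (fun x _ _ => G.rev_ne x)
      (fun x hx => by simpa [G.tail_rev, G.head_rev, and_comm] using hx)
      fun x _ => G.rev_rev x
  rwa [← Finset.sum_filter_add_sum_filter_not _ (fun x => G.head x ∈ X), Finset.filter_filter,
    Finset.filter_filter, hinside, zero_add] at hall

theorem sameSide_of_forall_ne_leaving {P : G.F → Prop} {X : Set G.V} {b : G.A}
    (hb : G.tail b ∈ X) (hb' : G.head b ∉ X)
    (h : ∀ x, G.tail x ∈ X → G.head x ∉ X → x ≠ b → G.SameSide P x) : G.SameSide P b := by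
  let f : G.F → ℤ := fun φ => if P φ then 1 else 0
  have hf : ∀ x, G.SameSide P x → f (G.left x) - f (G.right x) = 0 := fun x hx => by
    simp only [f, show P (G.left x) = P (G.right x) from propext hx, sub_self]
  have hsum := G.sum_leaving_eq_zero f X
  rw [Finset.sum_eq_single_of_mem b (by simp [hb, hb']) fun x hx hne => hf x <| by
    simp only [Finset.mem_filter, Finset.mem_univ, true_and] at hx
    exact h x hx.1 hx.2 hne] at hsum
  by_cases h₁ : P (G.left b) <;> by_cases h₂ : P (G.right b) <;>
    simp [f, h₁, h₂, SameSide] at hsum ⊢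

theorem sameSide_of_mem_cotree (hTs : G.IsCotree T Tstar root) (he : e ∈ Tstar) {y : G.A}
    (hy : y ∈ Tstar) (hne : y ≠ e) :
    G.SameSide (ReflTransGen (G.DualAdj Tstar) (G.dualHead e)) y :=
  hTs.reflTransGen_dualTail_iff hy fun h => hne (hTs.eq_of_dualHead_eq hy he h)

theorem sameSide_of_not_mem_tree (hTs : G.IsCotree T Tstar root) (he : e ∈ Tstar) {x : G.A}
    (hx : x ∉ T) (hrx : G.rev x ∉ T) (hxe : x ≠ e) (hrxe : G.rev x ≠ e) :
    G.SameSide (ReflTransGen (G.DualAdj Tstar) (G.dualHead e)) x := by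
  rcases hTs.mem_or_rev_mem hx hrx with h | h
  · exact G.sameSide_of_mem_cotree hTs he h hxe
  · exact G.sameSide_rev.1 (G.sameSide_of_mem_cotree hTs he h hrxe)

/-- Among the arcs leaving the subtree of `T` below `head a`, the only tree arc is `rev a`, and
the only cotree arcs that can separate the subtree of `Tstar` below `e*` from the rest are `e`
and `rev e`; a parity count over the leaving arcs does the rest. -/
theorem reflTransGen_endpoint_of_not_sameSide (hT : G.IsSPTree len d c T)
    (hd : G.IsSPDist len d) (hup : G.UniqueShortestPaths len d) (hTs : G.IsCotree T Tstar root)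
    (he : e ∈ Tstar) {a : G.A} (ha : a ∈ T)
    (hcross : ¬ G.SameSide (ReflTransGen (G.DualAdj Tstar) (G.dualHead e)) a) :
    ReflTransGen (G.Adj T) (G.head a) (G.tail e) ∨
      ReflTransGen (G.Adj T) (G.head a) (G.head e) := by
  by_contra! h
  obtain ⟨hte, hhe⟩ := h
  refine hcross (G.sameSide_rev.1 (G.sameSide_of_forall_ne_leaving
    (X := {z | ReflTransGen (G.Adj T) (G.head a) z}) (by rw [G.tail_rev]; exact .refl)
    (by rw [G.head_rev]; exact hT.not_reflTransGen_head_tail hd hup ha) fun x hx hx' hne => ?_))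
  by_cases hxT : x ∈ T
  · exact absurd (hx.tail ⟨x, hxT, rfl, rfl⟩) hx'
  by_cases hrxT : G.rev x ∈ T
  · refine absurd ?_ hne
    rw [← hT.eq_of_mem_of_reflTransGen_head ha hrxT (by rwa [G.head_rev]) (by rwa [G.tail_rev]),
      G.rev_rev]
  refine G.sameSide_of_not_mem_tree hTs he hxT hrxT (by rintro rfl; exact hte hx) ?_
  rintro rfl
  exact hhe (by rwa [G.head_rev])

theorem sameSide_of_tail_not_mem (hT : G.IsSPTree len d c T) (hd : G.IsSPDist len d)
    (hup : G.UniqueShortestPaths len d) (hTs : G.IsCotree T Tstar root) (he : e ∈ Tstar)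
    {U : Set G.V} (hU : ∀ a ∈ T, G.head a ∈ U → G.tail a ∈ U) (hte : G.tail e ∈ U)
    (hhe : G.head e ∈ U) {z : G.A} (hz : G.tail z ∉ U) :
    G.SameSide (ReflTransGen (G.DualAdj Tstar) (G.dualHead e)) z := by
  have hanc : ∀ {u w}, ReflTransGen (G.Adj T) u w → w ∈ U → u ∈ U := fun h hw => by
    induction h using ReflTransGen.head_induction_on with
    | refl => exact hw
    | head hstep _ ih =>
      obtain ⟨a, ha, rfl, rfl⟩ := hstep
      exact hU a ha ih
  have htree : ∀ a ∈ T, ¬ G.SameSide (ReflTransGen (G.DualAdj Tstar) (G.dualHead e)) a →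
      G.head a ∈ U := fun a ha h =>
    (G.reflTransGen_endpoint_of_not_sameSide hT hd hup hTs he ha h).elim (hanc · hte) (hanc · hhe)
  by_cases hzT : z ∈ T
  · by_contra h
    exact hz (hU z hzT (htree z hzT h))
  by_cases hrzT : G.rev z ∈ T
  · by_contra h
    exact hz (G.head_rev z ▸ htree _ hrzT (mt G.sameSide_rev.1 h))
  refine G.sameSide_of_not_mem_tree hTs he hzT hrzT (by rintro rfl; exact hz hte) ?_
  rintro rfl
  exact hz (by rwa [G.head_rev] at hhe)

theorem not_reflTransGen_of_incident_of_mem_comp (hT : G.IsSPTree len d c T)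
    (hd : G.IsSPDist len d) (hup : G.UniqueShortestPaths len d) (hTs : G.IsCotree T Tstar root)
    (he : e ∈ Tstar) {U K : Set G.V} (hU : ∀ a ∈ T, G.head a ∈ U → G.tail a ∈ U)
    (hte : G.tail e ∈ U) (hhe : G.head e ∈ U) (hK : G.IsCompOfComplement U K)
    (hroot : ∃ w ∈ K, G.Incident w root) {w : G.V} {ψ : G.F} (hw : w ∈ K)
    (hψ : G.Incident w ψ) : ¬ ReflTransGen (G.DualAdj Tstar) (G.dualHead e) ψ := by
  obtain ⟨x, hx, rfl⟩ := hK
  obtain ⟨w₀, hw₀, hroot⟩ := hroot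
  have : Nonempty G.F := ⟨root⟩
  obtain ⟨a, rfl⟩ := G.exists_tail_eq x
  have hside := fun {w ψ} (hw : ReflTransGen _ (G.tail a) w) (hψ : G.Incident w ψ) =>
    G.iff_of_reflTransGen_of_sameSide hTs.exists_isDualWalk
      (fun z hz => G.sameSide_of_tail_not_mem hT hd hup hTs he hU hte hhe hz) hx hw
      (G.incident_tail_left a) hψ
  exact fun h => hTs.dualHead_ne_root he
    (hTs.eq_root_of_reflTransGen ((hside hw₀ hroot).1 ((hside hw hψ).2 h)))

theorem not_reflTransGen_of_dualIncident_boundaryCycle (hT : G.IsSPTree len d c T)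
    (hd : G.IsSPDist len d) (hup : G.UniqueShortestPaths len d) (hTs : G.IsCotree T Tstar root)
    {S : Set G.V} {ω : G.V → ℝ} {C : Set G.A} (hC : C ∈ G.boundaryCycles (G.VorCell d S ω c))
    (hroot : ∃ b ∈ C, G.DualIncident b root) (he : e ∈ Tstar)
    (hte : G.tail e ∈ G.VorCell d S ω c) (hhe : G.head e ∈ G.VorCell d S ω c) {b : G.A}
    (hb : b ∈ C) {ψ : G.F} (hψ : G.DualIncident b ψ) :
    ¬ ReflTransGen (G.DualAdj Tstar) (G.dualHead e) ψ := by
  obtain ⟨K, hK, rfl⟩ := hC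
  obtain ⟨b₀, hb₀, hroot⟩ := hroot
  exact G.not_reflTransGen_of_incident_of_mem_comp hT hd hup hTs he
    (fun a ha => hT.tail_mem_vorCell hd ha) hte hhe hK
    ⟨_, hb₀.2, G.incident_head_of_dualIncident hroot⟩ hb.2 (G.incident_head_of_dualIncident hψ)

end FundamentalCut

end PlanarGraph

theorem cotree_path_penetrates_at_most_once_general
    (G : PlanarGraph) (len : G.A → ℝ) (d : G.V → G.V → ℝ)
    (hd : G.IsSPDist len d) (hup : G.UniqueShortestPaths len d)
    (S : Set G.V) (ω : G.V → ℝ) (v : G.V) (hinf : G.F)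
    (Vor : Set G.V) (hVor : Vor = G.VorCell d S ω v)
    (T : Set G.A) (hT : G.IsSPTree len d v T)
    (Tstar : Set G.A) (hTstar : G.IsCotree T Tstar hinf)
    (C₀ : Set G.A) (hC₀ : C₀ ∈ G.boundaryCycles Vor)
    (hC₀inf : ∃ a ∈ C₀, G.DualIncident a hinf) :
    ∀ (φ : G.F) (p : List G.A), G.IsDualWalk Tstar p hinf φ →
      Set.ncard {a : G.A | a ∈ p ∧ G.PenetratesAt Vor C₀ a} ≤ 1 ∧
      ∀ a ∈ p, ¬ G.ExitsAt Vor C₀ a := by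
  subst hVor
  intro φ p hp
  have hbelow : ∀ e ∈ p, G.tail e ∈ G.VorCell d S ω v → G.head e ∈ G.VorCell d S ω v →
      ∀ b ∈ C₀, ∀ ψ, G.DualIncident b ψ →
        ¬ Relation.ReflTransGen (G.DualAdj Tstar) (G.dualHead e) ψ :=
    fun e he hte hhe _ hb _ hψ => G.not_reflTransGen_of_dualIncident_boundaryCycle hT hd hup
      hTstar hC₀ hC₀inf (G.mem_of_isDualWalk hp he) hte hhe hb hψ
  refine ⟨(Set.ncard_le_one_iff (Set.toFinite _)).2 fun h₁ h₂ => ?_,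
    fun a ha ⟨hbel, _, b, hb, hψ⟩ => hbelow a ha (hbel _ (G.incident_tail_left a))
      (hbel _ (G.incident_head_left a)) b hb _ hψ .refl⟩
  obtain ⟨ha₁, -, hbel₁, b₁, hb₁, hψ₁⟩ := h₁
  obtain ⟨ha₂, -, hbel₂, b₂, hb₂, hψ₂⟩ := h₂
  rcases G.eq_or_reflTransGen_of_mem hp ha₁ ha₂ with h | h | h
  · exact h
  · exact hbelow _ ha₁ (hbel₁ _ (G.incident_tail_right _)) (hbel₁ _ (G.incident_head_right _))
      b₂ hb₂ _ hψ₂ h |>.elim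
  · exact hbelow _ ha₂ (hbel₂ _ (G.incident_tail_right _)) (hbel₂ _ (G.incident_head_right _))
      b₁ hb₁ _ hψ₁ h |>.elim

/-- Every root-to-leaf path in the cotree `T*` (rooted at `h∞*`; here any
directed path in `T*` starting at the root) contains at most one arc penetrating `Vor*(v)`
at `C*₀`, and contains no arc exiting `Vor*(v)` at `C*₀`, where `C*₀` is the boundary cycle
of `Vor*(v)` through `h∞*`. -/
theorem cotree_path_penetrates_at_most_once
    (G : PlanarGraph) (len : G.A → ℝ) (d : G.V → G.V → ℝ)
    (hd : G.IsSPDist len d) (hneg : G.NoNegCycle len)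
    (hup : G.UniqueShortestPaths len d) (hgen : G.GenericDistances d)
    (Holes : Set G.F) (S : Set G.V) (ω : G.V → ℝ)
    (hS : ∀ s ∈ S, ∃ h ∈ Holes, G.Incident s h)
    (hpart : ∀ w : G.V, ∃ s ∈ S, w ∈ G.VorCell d S ω s)
    (v : G.V) (hv : v ∈ S)
    (hinf : G.F) (hinfH : hinf ∈ Holes) (hvinf : G.Incident v hinf)
    (Vor : Set G.V) (hVor : Vor = G.VorCell d S ω v)
    (T : Set G.A) (hT : G.IsSPTree len d v T)
    (Tstar : Set G.A) (hTstar : G.IsCotree T Tstar hinf)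
    (C₀ : Set G.A) (hC₀ : C₀ ∈ G.boundaryCycles Vor)
    (hC₀inf : ∃ a ∈ C₀, G.DualIncident a hinf)
    (hC₀uniq : ∀ C ∈ G.boundaryCycles Vor,
      (∃ a ∈ C, G.DualIncident a hinf) → C = C₀) :
    ∀ (φ : G.F) (p : List G.A), G.IsDualWalk Tstar p hinf φ →
      Set.ncard {a : G.A | a ∈ p ∧ G.PenetratesAt Vor C₀ a} ≤ 1 ∧
      ∀ a ∈ p, ¬ G.ExitsAt Vor C₀ a :=
  cotree_path_penetrates_at_most_once_general G len d hd hup S ω v hinf Vor hVor T hT Tstar hTstar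
    C₀ hC₀ hC₀inf
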